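/- Let {X, S_i, p_i} be a measurable iterated function system and D ⊆ X × Σ a Borel set invariant under the skew product S(x,ω) = (S_{ω₁}(x), σω) (i.e. S⁻¹(D) = D). Then for every x ∈ X, Σ_{i∈I} p_i(x)·L_D(S_i(x)) = L_D(x), where L_D(x) = p_x(D_x), D_x = {ω : (x,ω) ∈ D}. -/

import Mathlib

open MeasureTheory Set
open scoped ENNReal NNReal

def iterWord {I X : Type*} (S : I → X → X) : List I → X → X
  | [], x => x
  | i :: l, x => iterWord S l (S i x)

def wtWord {I X : Type*} (S : I → X → X) (p : I → X → ℝ) : List I → X → ℝ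
  | [], _ => 1
  | i :: l, x => p i x * wtWord S p l (S i x)

def cylinder {I : Type*} (l : List I) : Set (ℕ → I) :=
  {ξ | ∀ (k : ℕ) (h : k < l.length), ξ k = l.get ⟨k, h⟩}

/-! Invariance of `D` under the skew product says `(x, ω) ∈ D ↔ (S_{ω₀} x, σω) ∈ D`, so the fibre
`D_x` splits along the first letter into the disjoint pieces `{ω₀ = i} ∩ σ⁻¹(D_{S_i x})`. The
measure `p_x` restricted to `{ω₀ = i}` and pushed forward by `σ` agrees with `p_i(x) · p_{S_i x}` on
cylinders, hence everywhere, because cylinders form a π-system generating the product σ-algebra. -/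

section Cylinders

variable {I : Type*}

def leftShift (ω : ℕ → I) (n : ℕ) : I := ω (n + 1)

theorem measurable_leftShift [MeasurableSpace I] : Measurable (leftShift (I := I)) :=
  measurable_pi_iff.mpr fun n => measurable_pi_apply (n + 1)

theorem cylinder_nil : cylinder ([] : List I) = univ := by
  ext ω; simp [_root_.cylinder]

theorem cylinder_cons (i : I) (l : List I) :
    cylinder (i :: l) = {ω | ω 0 = i} ∩ leftShift ⁻¹' cylinder l := by
  ext ω
  simp only [_root_.cylinder, leftShift, mem_inter_iff, mem_preimage, mem_ofPred_eq]
  constructor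
  · intro h
    exact ⟨h 0 (by simp), fun k hk => by simpa using h (k + 1) (by simpa using hk)⟩
  · rintro ⟨h0, h⟩ (_ | k) hk
    · simpa using h0
    · simpa using h k (by simpa using hk)

theorem mem_cylinder_ofFn (ω : ℕ → I) (n : ℕ) : ω ∈ cylinder (List.ofFn fun k : Fin n => ω k) := by
  intro k hk
  simp

theorem isPiSystem_cylinders : IsPiSystem (range (cylinder (I := I))) := by
  rintro _ ⟨l₁, rfl⟩ _ ⟨l₂, rfl⟩ ⟨ξ, hξ₁, hξ₂⟩
  wlog h : l₁.length ≤ l₂.length generalizing l₁ l₂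
  · rw [inter_comm]; exact this l₂ l₁ hξ₂ hξ₁ (le_of_not_ge h)
  refine ⟨l₂, (inter_eq_right.mpr fun ω hω k hk => ?_).symm⟩
  have hk₂ : k < l₂.length := hk.trans_le h
  rw [hω k hk₂, ← hξ₂ k hk₂, hξ₁ k hk]

variable [MeasurableSpace I] [MeasurableSingletonClass I]

theorem measurableSet_cylinder (l : List I) : MeasurableSet (cylinder l) := by
  induction l with
  | nil => simp [cylinder_nil]
  | cons i l ih =>
    rw [cylinder_cons]
    exact (measurable_pi_apply 0 (measurableSet_singleton i)).inter (measurable_leftShift ih)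

theorem pi_eq_generateFrom_cylinders [Countable I] :
    MeasurableSpace.pi = MeasurableSpace.generateFrom (range (cylinder (I := I))) := by
  refine le_antisymm (iSup_le fun n => ?_)
    (MeasurableSpace.generateFrom_le fun _ ⟨l, hl⟩ => hl ▸ measurableSet_cylinder l)
  refine Measurable.comap_le
    (@measurable_to_countable' I (ℕ → I) _ _ (.generateFrom _) (fun ω => ω n) fun i => ?_)
  have : (fun ω : ℕ → I => ω n) ⁻¹' {i} =
      ⋃ f : {f : Fin (n + 1) → I // f (Fin.last n) = i}, cylinder (List.ofFn f.1) := by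
    ext ω
    simp only [mem_preimage, mem_singleton_iff, mem_iUnion]
    constructor
    · rintro rfl
      exact ⟨⟨fun k => ω k, rfl⟩, mem_cylinder_ofFn ω (n + 1)⟩
    · rintro ⟨⟨f, rfl⟩, hω⟩
      have := hω n (by simp)
      rwa [List.get_eq_getElem, List.getElem_ofFn] at this
  rw [this]
  exact .iUnion fun f => MeasurableSpace.measurableSet_generateFrom ⟨_, rfl⟩

end Cylinders

section ShiftedMeasure

variable {I : Type*} [MeasurableSpace I] [MeasurableSingletonClass I] [Countable I]

theorem measure_inter_leftShift_preimage {μ ν : Measure (ℕ → I)} [IsFiniteMeasure μ] {i : I}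
    {c : ℝ≥0∞} (h : ∀ l, μ (cylinder (i :: l)) = c * ν (cylinder l)) {A : Set (ℕ → I)}
    (hA : MeasurableSet A) : μ ({ω | ω 0 = i} ∩ leftShift ⁻¹' A) = c * ν A := by
  have hmap : ∀ s, MeasurableSet s →
      (μ.restrict {ω | ω 0 = i}).map leftShift s = μ ({ω | ω 0 = i} ∩ leftShift ⁻¹' s) :=
    fun s hs => by
      rw [Measure.map_apply measurable_leftShift hs,
        Measure.restrict_apply (measurable_leftShift hs), inter_comm]
  have hcyl : ∀ l, (μ.restrict {ω | ω 0 = i}).map leftShift (cylinder l) = (c • ν) (cylinder l) :=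
    fun l => by
      rw [hmap _ (measurableSet_cylinder l), ← cylinder_cons, h, Measure.smul_apply, smul_eq_mul]
  have hμν : (μ.restrict {ω | ω 0 = i}).map leftShift = c • ν :=
    ext_of_generate_finite _ pi_eq_generateFrom_cylinders isPiSystem_cylinders
      (by rintro _ ⟨l, rfl⟩; exact hcyl l) (by simpa only [cylinder_nil] using hcyl [])
  rw [← hmap A hA, hμν, Measure.smul_apply, smul_eq_mul]

end ShiftedMeasure

def skewProduct {X I : Type*} (S : I → X → X) (z : X × (ℕ → I)) : X × (ℕ → I) :=
  (S (z.2 0) z.1, leftShift z.2)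

theorem fiber_eq_iUnion_of_skewProduct_preimage_eq {X I : Type*} (S : I → X → X)
    {D : Set (X × (ℕ → I))} (hD : skewProduct S ⁻¹' D = D) (x : X) :
    {ω | (x, ω) ∈ D} = ⋃ i, {ω | ω 0 = i} ∩ leftShift ⁻¹' {ω | (S i x, ω) ∈ D} := by
  ext ω
  have hω : (S (ω 0) x, leftShift ω) ∈ D ↔ (x, ω) ∈ D := Set.ext_iff.mp hD (x, ω)
  simp only [mem_iUnion, mem_inter_iff, mem_ofPred_eq, mem_preimage, ← hω]
  exact ⟨fun h => ⟨ω 0, rfl, h⟩, by rintro ⟨i, rfl, h⟩; exact h⟩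

theorem stmt7_general {X I : Type*} [MeasurableSpace X]
    [Fintype I] [MeasurableSpace I] [MeasurableSingletonClass I]
    (S : I → X → X) (p : I → X → ℝ) (hp0 : ∀ i x, 0 ≤ p i x)
    (px : X → Measure (ℕ → I)) (hpxprob : ∀ x, IsProbabilityMeasure (px x))
    (hpxcyl : ∀ (x : X) (l : List I), px x (cylinder l) = ENNReal.ofReal (wtWord S p l x))
    (D : Set (X × (ℕ → I))) (hD : MeasurableSet D)
    (hDinv : (fun z : X × (ℕ → I) => (S (z.2 0) z.1, fun n => z.2 (n + 1))) ⁻¹' D = D) :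
    ∀ x : X, ∑ i : I, ENNReal.ofReal (p i x) * px (S i x) {ω | (S i x, ω) ∈ D}
      = px x {ω | (x, ω) ∈ D} := by
  intro x
  have := hpxprob x
  rw [fiber_eq_iUnion_of_skewProduct_preimage_eq S hDinv x,
    measure_iUnion ?disjoint fun i => ?measurable, tsum_fintype]
  · refine Finset.sum_congr rfl fun i _ =>
      (measure_inter_leftShift_preimage (fun l => ?_) (measurable_prodMk_left hD)).symm
    rw [hpxcyl, hpxcyl, wtWord, ENNReal.ofReal_mul (hp0 i x)]
  case disjoint =>
    exact fun i j hij => (disjoint_left.2 fun ω hi hj => hij (hi.symm.trans hj)).mono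
      inter_subset_left inter_subset_left
  case measurable =>
    exact (measurable_pi_apply 0 (measurableSet_singleton i)).inter
      (measurable_leftShift (measurable_prodMk_left hD))

/-- If `D ⊆ X × Σ` is a Borel set invariant under the skew product
`S(x,ω) = (S_{ω₁}(x), σω)` (i.e. `S⁻¹(D) = D`), then for every `x ∈ X`,
`Σ_i p_i(x)·L_D(S_i(x)) = L_D(x)`, where `L_D(x) = p_x(D_x)`. -/
theorem stmt7 {X I : Type*} [MetricSpace X] [TopologicalSpace.SeparableSpace X]
    [MeasurableSpace X] [BorelSpace X]
    [Fintype I] [MeasurableSpace I] [MeasurableSingletonClass I]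
    (S : I → X → X) (hS : ∀ i, Measurable (S i))
    (p : I → X → ℝ) (hp : ∀ i, Measurable (p i))
    (hp0 : ∀ i x, 0 ≤ p i x) (hp1 : ∀ x, ∑ i : I, p i x = 1)
    (px : X → Measure (ℕ → I)) (hpxprob : ∀ x, IsProbabilityMeasure (px x))
    (hpxcyl : ∀ (x : X) (l : List I), px x (cylinder l) = ENNReal.ofReal (wtWord S p l x))
    (D : Set (X × (ℕ → I))) (hD : MeasurableSet D)
    (hDinv : (fun z : X × (ℕ → I) => (S (z.2 0) z.1, fun n => z.2 (n + 1))) ⁻¹' D = D) :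
    ∀ x : X, ∑ i : I, ENNReal.ofReal (p i x) * px (S i x) {ω | (S i x, ω) ∈ D}
      = px x {ω | (x, ω) ∈ D} :=
  stmt7_general S p hp0 px hpxprob hpxcyl D hD hDinv
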